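/- arXiv:1909.12787 — 7 statements merged into one kernel-verified Lean document; each statement's English description precedes it below -/
import Mathlib

section
/- Let C be an algebraically ordered compact cone satisfying Riesz refinement. Then the set C* of linear maps C → [0,∞] is lattice ordered, and for f, g ∈ C* the infimum is given by the Riesz–Kantorovich formula (f ∧ g)(a) = inf { f(a₁) + g(a₂) : a = a₁ + a₂ }. -/
/-! Write `RKinf f g a` and `RKsup f g a` as the infimum and supremum of `f a₁ + g a₂` over the
decompositions `a = a₁ + a₂`. By Riesz refinement every decomposition of `a + b` refines into
one of `a` plus one of `b`, which makes both additive; they are positively homogeneous because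
scaling by `t > 0` is an additive automorphism of the cone. An additive `h` below `f` and `g`
satisfies `h a = h a₁ + h a₂ ≤ f a₁ + g a₂`, so `RKinf f g` is the greatest lower bound, and
dually `RKsup f g` is the least upper bound. -/

open scoped ENNReal
open Filter Topology

namespace ConeFormal

variable {C : Type*} [AddCommMonoid C] [TopologicalSpace C]

/-- The algebraic (pre)order on a cone: `a ≤ b` iff `a + c = b` for some `c`. -/
def ALE (a b : C) : Prop := ∃ c : C, a + c = b

/-- `σ` is a scalar multiplication by `(0,∞)` making `C` a topological cone:
addition and scalar multiplication are (jointly) continuous, and the cone axioms hold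
for strictly positive scalars. -/
def IsTopCone (σ : ℝ → C → C) : Prop :=
  ContinuousAdd C ∧
  ContinuousOn (fun p : ℝ × C => σ p.1 p.2) {p : ℝ × C | 0 < p.1} ∧
  (∀ s t : ℝ, 0 < s → 0 < t → ∀ a : C, σ (s * t) a = σ s (σ t a)) ∧
  (∀ a : C, σ 1 a = a) ∧
  (∀ t : ℝ, 0 < t → ∀ a b : C, σ t (a + b) = σ t a + σ t b) ∧
  (∀ s t : ℝ, 0 < s → 0 < t → ∀ a : C, σ (s + t) a = σ s a + σ t a)

/-- `C` is algebraically ordered: the algebraic preorder is antisymmetric. -/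
def AlgOrdered (C : Type*) [AddCommMonoid C] [TopologicalSpace C] : Prop :=
  ∀ a b : C, ALE a b → ALE b a → a = b

/-- Riesz refinement. -/
def RieszRefine (C : Type*) [AddCommMonoid C] : Prop :=
  ∀ a₁ a₂ b₁ b₂ : C, a₁ + a₂ = b₁ + b₂ →
    ∃ x₁₁ x₁₂ x₂₁ x₂₂ : C, a₁ = x₁₁ + x₁₂ ∧ a₂ = x₂₁ + x₂₂ ∧
      b₁ = x₁₁ + x₂₁ ∧ b₂ = x₁₂ + x₂₂

/-- A linear map `C → [0,∞]`. -/
def IsLinMap (σ : ℝ → C → C) (f : C → ℝ≥0∞) : Prop :=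
  f 0 = 0 ∧ (∀ a b : C, f (a + b) = f a + f b) ∧
  ∀ t : ℝ, 0 < t → ∀ a : C, f (σ t a) = ENNReal.ofReal t * f a

/-- The Riesz–Kantorovich infimum formula. -/
noncomputable def RKinf (f g : C → ℝ≥0∞) (a : C) : ℝ≥0∞ :=
  sInf {t : ℝ≥0∞ | ∃ a₁ a₂ : C, a = a₁ + a₂ ∧ t = f a₁ + g a₂}

/-- The Riesz–Kantorovich supremum formula. -/
noncomputable def RKsup (f g : C → ℝ≥0∞) (a : C) : ℝ≥0∞ :=
  sSup {t : ℝ≥0∞ | ∃ a₁ a₂ : C, a = a₁ + a₂ ∧ t = f a₁ + g a₂}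

/-- Lower semicontinuity of `f : C → [0,∞]`: `{a : f a ≤ t}` is closed for every
`t ∈ [0,∞)`. -/
def IsLSCMap (f : C → ℝ≥0∞) : Prop :=
  ∀ t : ℝ≥0∞, t ≠ ∞ → IsClosed {a : C | f a ≤ t}

/-- `C` is inf-semilattice ordered (w.r.t. the algebraic order), with infimum
operation `inf` over which addition distributes. -/
def InfSemilatticeOrdered (inf : C → C → C) : Prop :=
  (∀ a b : C, ALE (inf a b) a ∧ ALE (inf a b) b ∧
    ∀ z : C, ALE z a → ALE z b → ALE z (inf a b)) ∧
  (∀ a b c : C, a + inf b c = inf (a + b) (a + c))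

section Decompositions

variable {M N : Type*} [AddCommMonoid M] [AddCommMonoid N] {f g h : M → ℝ≥0∞} {a : M}

theorem RKinf_eq_iInf (f g : M → ℝ≥0∞) (a : M) :
    RKinf f g a = ⨅ p : {p : M × M // a = p.1 + p.2}, f p.1.1 + g p.1.2 := by
  rw [RKinf, ← sInf_range]
  congr 1
  ext t
  simp [eq_comm]

theorem RKsup_eq_iSup (f g : M → ℝ≥0∞) (a : M) :
    RKsup f g a = ⨆ p : {p : M × M // a = p.1 + p.2}, f p.1.1 + g p.1.2 := by
  rw [RKsup, ← sSup_range]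
  congr 1
  ext t
  simp [eq_comm]

instance (a : M) : Nonempty {p : M × M // a = p.1 + p.2} := ⟨⟨(a, 0), (add_zero a).symm⟩⟩

theorem RKinf_le {a₁ a₂ : M} (h : a = a₁ + a₂) : RKinf f g a ≤ f a₁ + g a₂ :=
  sInf_le ⟨a₁, a₂, h, rfl⟩

theorem le_RKinf {t : ℝ≥0∞} (h : ∀ a₁ a₂, a = a₁ + a₂ → t ≤ f a₁ + g a₂) : t ≤ RKinf f g a := by
  rw [RKinf_eq_iInf]
  exact le_iInf fun p => h _ _ p.2

theorem le_RKsup {a₁ a₂ : M} (h : a = a₁ + a₂) : f a₁ + g a₂ ≤ RKsup f g a :=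
  le_sSup ⟨a₁, a₂, h, rfl⟩

theorem RKsup_le {t : ℝ≥0∞} (h : ∀ a₁ a₂, a = a₁ + a₂ → f a₁ + g a₂ ≤ t) : RKsup f g a ≤ t := by
  rw [RKsup_eq_iSup]
  exact iSup_le fun p => h _ _ p.2

theorem RKinf_le_left (hg : g 0 = 0) : RKinf f g a ≤ f a := by
  simpa [hg] using RKinf_le (f := f) (g := g) (add_zero a).symm

theorem RKinf_le_right (hf : f 0 = 0) : RKinf f g a ≤ g a := by
  simpa [hf] using RKinf_le (f := f) (g := g) (zero_add a).symm

theorem le_RKsup_left (hg : g 0 = 0) : f a ≤ RKsup f g a := by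
  simpa [hg] using le_RKsup (f := f) (g := g) (add_zero a).symm

theorem le_RKsup_right (hf : f 0 = 0) : g a ≤ RKsup f g a := by
  simpa [hf] using le_RKsup (f := f) (g := g) (zero_add a).symm

theorem le_RKinf_of_le (hh : ∀ a b, h (a + b) = h a + h b) (hf : ∀ a, h a ≤ f a)
    (hg : ∀ a, h a ≤ g a) : h a ≤ RKinf f g a :=
  le_RKinf fun a₁ a₂ ha => ha ▸ (hh a₁ a₂).trans_le (add_le_add (hf a₁) (hg a₂))

theorem RKsup_le_of_le (hh : ∀ a b, h (a + b) = h a + h b) (hf : ∀ a, f a ≤ h a)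
    (hg : ∀ a, g a ≤ h a) : RKsup f g a ≤ h a :=
  RKsup_le fun a₁ a₂ ha => ha ▸ (add_le_add (hf a₁) (hg a₂)).trans_eq (hh a₁ a₂).symm

theorem RKinf_comp_addEquiv (e : M ≃+ N) (f g : N → ℝ≥0∞) (a : M) :
    RKinf (f ∘ e) (g ∘ e) a = RKinf f g (e a) := by
  refine le_antisymm (le_RKinf fun b₁ b₂ hb => ?_) (le_RKinf fun a₁ a₂ ha => ?_)
  · calc RKinf (f ∘ e) (g ∘ e) a ≤ f (e (e.symm b₁)) + g (e (e.symm b₂)) :=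
          RKinf_le (e.injective (by simp [hb]))
      _ = f b₁ + g b₂ := by simp
  · exact RKinf_le (by rw [ha, map_add])

theorem RKsup_comp_addEquiv (e : M ≃+ N) (f g : N → ℝ≥0∞) (a : M) :
    RKsup (f ∘ e) (g ∘ e) a = RKsup f g (e a) := by
  refine le_antisymm (RKsup_le fun a₁ a₂ ha => ?_) (RKsup_le fun b₁ b₂ hb => ?_)
  · exact le_RKsup (by rw [ha, map_add])
  · calc f b₁ + g b₂ = f (e (e.symm b₁)) + g (e (e.symm b₂)) := by simp
      _ ≤ RKsup (f ∘ e) (g ∘ e) a := le_RKsup (e.injective (by simp [hb]))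

theorem RKinf_const_mul {c : ℝ≥0∞} (hc : c ≠ ∞) :
    RKinf (fun x => c * f x) (fun x => c * g x) a = c * RKinf f g a := by
  simp only [RKinf_eq_iInf, ← mul_add]
  exact (ENNReal.mul_iInf fun h => absurd h hc).symm

theorem RKsup_const_mul (c : ℝ≥0∞) :
    RKsup (fun x => c * f x) (fun x => c * g x) a = c * RKsup f g a := by
  simp only [RKsup_eq_iSup, ← mul_add, ENNReal.mul_iSup]

variable (hf : ∀ a b, f (a + b) = f a + f b) (hg : ∀ a b, g (a + b) = g a + g b)
include hf hg

theorem RKinf_add (hRR : RieszRefine M) (a b : M) :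
    RKinf f g (a + b) = RKinf f g a + RKinf f g b := by
  refine le_antisymm ?_ (le_RKinf fun c₁ c₂ hc => ?_)
  · simp only [RKinf_eq_iInf f g a, RKinf_eq_iInf f g b]
    refine ENNReal.le_iInf_add_iInf fun ⟨⟨a₁, a₂⟩, ha⟩ ⟨⟨b₁, b₂⟩, hb⟩ => ?_
    calc RKinf f g (a + b) ≤ f (a₁ + b₁) + g (a₂ + b₂) := RKinf_le (by rw [ha, hb]; abel)
      _ = f a₁ + g a₂ + (f b₁ + g b₂) := by rw [hf, hg]; ring
  · obtain ⟨x₁₁, x₁₂, x₂₁, x₂₂, ha, hb, hc₁, hc₂⟩ := hRR a b c₁ c₂ hc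
    calc RKinf f g a + RKinf f g b ≤ f x₁₁ + g x₁₂ + (f x₂₁ + g x₂₂) :=
          add_le_add (RKinf_le ha) (RKinf_le hb)
      _ = f c₁ + g c₂ := by rw [hc₁, hc₂, hf, hg]; ring

theorem RKsup_add (hRR : RieszRefine M) (a b : M) :
    RKsup f g (a + b) = RKsup f g a + RKsup f g b := by
  refine le_antisymm (RKsup_le fun c₁ c₂ hc => ?_) ?_
  · obtain ⟨x₁₁, x₁₂, x₂₁, x₂₂, ha, hb, hc₁, hc₂⟩ := hRR a b c₁ c₂ hc
    calc f c₁ + g c₂ = f x₁₁ + g x₁₂ + (f x₂₁ + g x₂₂) := by rw [hc₁, hc₂, hf, hg]; ring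
      _ ≤ RKsup f g a + RKsup f g b := add_le_add (le_RKsup ha) (le_RKsup hb)
  · simp only [RKsup_eq_iSup f g a, RKsup_eq_iSup f g b]
    refine ENNReal.iSup_add_iSup_le fun ⟨⟨a₁, a₂⟩, ha⟩ ⟨⟨b₁, b₂⟩, hb⟩ => ?_
    calc f a₁ + g a₂ + (f b₁ + g b₂) = f (a₁ + b₁) + g (a₂ + b₂) := by rw [hf, hg]; ring
      _ ≤ RKsup f g (a + b) := le_RKsup (by rw [ha, hb]; abel)

theorem RKsup_le_add : RKsup f g a ≤ f a + g a :=
  RKsup_le_of_le (h := f + g) (fun a b => by simp only [Pi.add_apply, hf, hg]; ring)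
    (fun _ => le_self_add) (fun _ => le_add_self)

end Decompositions

section LinMap

variable {M : Type*} [AddCommMonoid M] {σ : ℝ → M → M} {f : M → ℝ≥0∞}

theorem IsLinMap.map_zero (hf : IsLinMap σ f) : f 0 = 0 := hf.1

theorem IsLinMap.map_add (hf : IsLinMap σ f) (a b : M) : f (a + b) = f a + f b := hf.2.1 a b

theorem IsLinMap.map_smul (hf : IsLinMap σ f) {t : ℝ} (ht : 0 < t) (a : M) :
    f (σ t a) = ENNReal.ofReal t * f a := hf.2.2 t ht a

end LinMap

section Cone

variable {σ : ℝ → C → C} {f g : C → ℝ≥0∞}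

noncomputable def IsTopCone.scaleAddEquiv (hσ : IsTopCone σ) {t : ℝ} (ht : 0 < t) : C ≃+ C where
  toFun := σ t
  invFun := σ t⁻¹
  left_inv a := by
    simp only [← hσ.2.2.1 _ _ (inv_pos.2 ht) ht, inv_mul_cancel₀ ht.ne', hσ.2.2.2.1]
  right_inv a := by
    simp only [← hσ.2.2.1 _ _ ht (inv_pos.2 ht), mul_inv_cancel₀ ht.ne', hσ.2.2.2.1]
  map_add' := hσ.2.2.2.2.1 t ht

theorem IsLinMap.comp_scaleAddEquiv (hf : IsLinMap σ f) (hσ : IsTopCone σ) {t : ℝ} (ht : 0 < t) :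
    f ∘ hσ.scaleAddEquiv ht = fun a => ENNReal.ofReal t * f a :=
  funext (hf.map_smul ht)

variable (hσ : IsTopCone σ) (hRR : RieszRefine C) (hf : IsLinMap σ f) (hg : IsLinMap σ g)
include hσ hRR hf hg

theorem isLinMap_RKinf : IsLinMap σ (RKinf f g) := by
  refine ⟨?_, RKinf_add hf.map_add hg.map_add hRR, fun t ht a => ?_⟩
  · exact nonpos_iff_eq_zero.1 ((RKinf_le_left hg.map_zero).trans_eq hf.map_zero)
  · change RKinf f g (hσ.scaleAddEquiv ht a) = _
    rw [← RKinf_comp_addEquiv, hf.comp_scaleAddEquiv hσ ht, hg.comp_scaleAddEquiv hσ ht,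
      RKinf_const_mul ENNReal.ofReal_ne_top]

theorem isLinMap_RKsup : IsLinMap σ (RKsup f g) := by
  refine ⟨?_, RKsup_add hf.map_add hg.map_add hRR, fun t ht a => ?_⟩
  · exact nonpos_iff_eq_zero.1 ((RKsup_le_add hf.map_add hg.map_add).trans_eq
      (by rw [hf.map_zero, hg.map_zero, add_zero]))
  · change RKsup f g (hσ.scaleAddEquiv ht a) = _
    rw [← RKsup_comp_addEquiv, hf.comp_scaleAddEquiv hσ ht, hg.comp_scaleAddEquiv hσ ht,
      RKsup_const_mul]

end Cone

theorem stmt2_general {C : Type*} [AddCommMonoid C] [TopologicalSpace C]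
    (σ : ℝ → C → C) (hcone : IsTopCone σ)
    (hRR : RieszRefine C)
    (f g : C → ℝ≥0∞) (hf : IsLinMap σ f) (hg : IsLinMap σ g) :
    (IsLinMap σ (RKinf f g) ∧
      (∀ a : C, RKinf f g a ≤ f a) ∧ (∀ a : C, RKinf f g a ≤ g a) ∧
      (∀ h : C → ℝ≥0∞, IsLinMap σ h → (∀ a : C, h a ≤ f a) → (∀ a : C, h a ≤ g a) →
        ∀ a : C, h a ≤ RKinf f g a)) ∧
    (∃ k : C → ℝ≥0∞, IsLinMap σ k ∧
      (∀ a : C, f a ≤ k a) ∧ (∀ a : C, g a ≤ k a) ∧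
      (∀ h : C → ℝ≥0∞, IsLinMap σ h → (∀ a : C, f a ≤ h a) → (∀ a : C, g a ≤ h a) →
        ∀ a : C, k a ≤ h a)) :=
  ⟨⟨isLinMap_RKinf hcone hRR hf hg, fun _ => RKinf_le_left hg.map_zero,
      fun _ => RKinf_le_right hf.map_zero,
      fun _ hh hhf hhg _ => le_RKinf_of_le hh.map_add hhf hhg⟩,
    ⟨RKsup f g, isLinMap_RKsup hcone hRR hf hg, fun _ => le_RKsup_left hg.map_zero,
      fun _ => le_RKsup_right hf.map_zero,
      fun _ hh hfh hgh _ => RKsup_le_of_le hh.map_add hfh hgh⟩⟩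

/-- if `C` is an algebraically ordered compact cone with Riesz
refinement, then the linear maps `C → [0,∞]` form a lattice in the pointwise order,
with infimum given by the Riesz–Kantorovich formula. -/
theorem stmt2 {C : Type*} [AddCommMonoid C] [TopologicalSpace C] [CompactSpace C]
    (σ : ℝ → C → C) (hcone : IsTopCone σ) (halg : AlgOrdered C)
    (hRR : RieszRefine C)
    (f g : C → ℝ≥0∞) (hf : IsLinMap σ f) (hg : IsLinMap σ g) :
    (IsLinMap σ (RKinf f g) ∧
      (∀ a : C, RKinf f g a ≤ f a) ∧ (∀ a : C, RKinf f g a ≤ g a) ∧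
      (∀ h : C → ℝ≥0∞, IsLinMap σ h → (∀ a : C, h a ≤ f a) → (∀ a : C, h a ≤ g a) →
        ∀ a : C, h a ≤ RKinf f g a)) ∧
    (∃ k : C → ℝ≥0∞, IsLinMap σ k ∧
      (∀ a : C, f a ≤ k a) ∧ (∀ a : C, g a ≤ k a) ∧
      (∀ h : C → ℝ≥0∞, IsLinMap σ h → (∀ a : C, f a ≤ h a) → (∀ a : C, g a ≤ h a) →
        ∀ a : C, k a ≤ h a)) :=
  stmt2_general σ hcone hRR f g hf hg

end ConeFormal
end

section
/- Let S be a Cu-semigroup satisfying O7, let w ∈ S, and let J ⊆ S be an ideal. Then the set {x ∈ S : x ∈ J and x ≤ w} is upward directed. -/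
/-!
Let `D = J ∩ Iic w` and let `P` be the set of elements way below some element of `D`. If
`a ≪ c₁` and `b ≪ c₂` with `cᵢ ∈ D`, then O7 gives `x` with `a, b ≪ x ≤ w` and `x ≤ c₁ + c₂ ∈ J`,
and interpolating inside `x` (O2) gives a common upper bound of `a, b` in `P`; so `P` is directed.
By O2 every element of `D` is the supremum of a sequence in `P`. Dominating the approximating
sequences of two elements of `D` by one increasing sequence in `P`, its supremum lies in `D`
because `J` is closed under suprema, and it bounds both elements.
-/

open scoped ENNReal

namespace CuFormal

variable {S : Type*} [AddCommMonoid S] [PartialOrder S]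

/-- The algebra-free way-below relation: `x ≪ y` iff whenever `y ≤ sup yₙ` for an
increasing sequence with supremum, then `x ≤ yₙ` for some `n`. -/
def WayBelow (x y : S) : Prop :=
  ∀ f : ℕ → S, Monotone f → ∀ s : S, IsLUB (Set.range f) s → y ≤ s → ∃ n, x ≤ f n

/-- Positively ordered monoid with addition monotone. -/
def PosOrdered : Prop :=
  (∀ x : S, (0 : S) ≤ x) ∧ ∀ a b c : S, b ≤ c → a + b ≤ a + c

/-- O1: every increasing sequence has a supremum. -/
def AxO1 : Prop := ∀ f : ℕ → S, Monotone f → ∃ s : S, IsLUB (Set.range f) s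

/-- O2: every element is the supremum of a ≪-increasing sequence. -/
def AxO2 : Prop := ∀ x : S, ∃ f : ℕ → S, Monotone f ∧
  (∀ n, WayBelow (f n) (f (n + 1))) ∧ IsLUB (Set.range f) x

/-- O3 -/
def AxO3 : Prop := ∀ x₁ y₁ x₂ y₂ : S,
  WayBelow x₁ y₁ → WayBelow x₂ y₂ → WayBelow (x₁ + x₂) (y₁ + y₂)

/-- O4 -/
def AxO4 : Prop := ∀ f g : ℕ → S, Monotone f → Monotone g →
  ∀ a b : S, IsLUB (Set.range f) a → IsLUB (Set.range g) b →
    IsLUB (Set.range fun n => f n + g n) (a + b)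

/-- A Cu-semigroup: positively ordered monoid satisfying O1–O4. -/
def CuSemigroup : Prop :=
  PosOrdered (S := S) ∧ AxO1 (S := S) ∧ AxO2 (S := S) ∧ AxO3 (S := S) ∧ AxO4 (S := S)

/-- O5 -/
def AxO5 : Prop := ∀ x' x y w' w : S, WayBelow x' x → x ≤ y → WayBelow w' w →
  x + w ≤ y → ∃ z : S, x' + z ≤ y ∧ y ≤ x + z ∧ WayBelow w' z

/-- O6 -/
def AxO6 : Prop := ∀ x' x y z : S, WayBelow x' x → x ≤ y + z →
  ∃ y' z' : S, x' ≤ y' + z' ∧ y' ≤ x ∧ y' ≤ y ∧ z' ≤ x ∧ z' ≤ z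

/-- O7 -/
def AxO7 : Prop := ∀ x₁' x₁ x₂' x₂ w : S,
  WayBelow x₁' x₁ → x₁ ≤ w → WayBelow x₂' x₂ → x₂ ≤ w →
  ∃ x : S, WayBelow x₁' x ∧ WayBelow x₂' x ∧ x ≤ w ∧ x ≤ x₁ + x₂

/-- An ideal: a downward hereditary subsemigroup closed under suprema of increasing
sequences. -/
def IsIdeal (J : Set S) : Prop :=
  (0 : S) ∈ J ∧ (∀ x y : S, x ∈ J → y ∈ J → x + y ∈ J) ∧
  (∀ x y : S, y ∈ J → x ≤ y → x ∈ J) ∧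
  (∀ f : ℕ → S, Monotone f → (∀ n, f n ∈ J) →
    ∀ s : S, IsLUB (Set.range f) s → s ∈ J)

/-- Countably based. -/
def CountablyBased : Prop := ∃ B : Set S, B.Countable ∧
  ∀ x : S, ∃ f : ℕ → S, (∀ n, f n ∈ B) ∧ Monotone f ∧
    (∀ n, WayBelow (f n) (f (n + 1))) ∧ IsLUB (Set.range f) x

/-- A functional on `S`: preserves `0`, addition, order and suprema of increasing
sequences. -/
def IsFunctional (l : S → ℝ≥0∞) : Prop :=
  l 0 = 0 ∧ (∀ x y : S, l (x + y) = l x + l y) ∧ Monotone l ∧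
  (∀ f : ℕ → S, Monotone f → ∀ s : S, IsLUB (Set.range f) s → l s = ⨆ n, l (f n))

/-- `(x̂ ∧ ŷ)(λ) = inf { λ₁(x) + λ₂(y) : λ = λ₁ + λ₂ }`. -/
noncomputable def hatInf (x y : S) (l : S → ℝ≥0∞) : ℝ≥0∞ :=
  sInf {t : ℝ≥0∞ | ∃ l₁ l₂ : S → ℝ≥0∞, IsFunctional l₁ ∧ IsFunctional l₂ ∧
    (∀ u : S, l u = l₁ u + l₂ u) ∧ t = l₁ x + l₂ y}

/-- Edwards' condition for the functional `l`. -/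
def EdwardsFor (l : S → ℝ≥0∞) : Prop := ∀ x y : S,
  hatInf x y l = sSup {t : ℝ≥0∞ | ∃ z : S, z ≤ x ∧ z ≤ y ∧ t = l z}

/-- The ideal generated by a subset. -/
def idealGen (X : Set S) : Set S := ⋂₀ {J : Set S | IsIdeal J ∧ X ⊆ J}

theorem _root_.DirectedOn.exists_monotone_ge {α : Type*} [Preorder α] {P : Set α}
    (hP : DirectedOn (· ≤ ·) P) (u : ℕ → α) (hu : ∀ n, u n ∈ P) :
    ∃ d : ℕ → α, Monotone d ∧ (∀ n, d n ∈ P) ∧ ∀ n, u n ≤ d n := by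
  choose! ub hubP hub_left hub_right using hP
  let d : ℕ → α := fun n => Nat.rec (u 0) (fun n dn => ub dn (u (n + 1))) n
  have hdP : ∀ n, d n ∈ P := by
    intro n
    induction n with
    | zero => exact hu 0
    | succ n ih => exact hubP _ ih _ (hu _)
  refine ⟨d, monotone_nat_of_le_succ fun n => hub_left _ (hdP n) _ (hu _), hdP, ?_⟩
  rintro (_ | n)
  · exact le_rfl
  · exact hub_right _ (hdP n) _ (hu _)

theorem _root_.DirectedOn.of_isLUB_seq {α : Type*} [Preorder α] {P D : Set α}
    (hP : DirectedOn (· ≤ ·) P)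
    (happrox : ∀ x ∈ D, ∃ f : ℕ → α, (∀ n, f n ∈ P) ∧ IsLUB (Set.range f) x)
    (hbdd : ∀ d : ℕ → α, Monotone d → (∀ n, d n ∈ P) → ∃ s ∈ D, s ∈ upperBounds (Set.range d)) :
    DirectedOn (· ≤ ·) D := by
  intro x₁ hx₁ x₂ hx₂
  obtain ⟨f, hfP, hfx₁⟩ := happrox x₁ hx₁
  obtain ⟨g, hgP, hgx₂⟩ := happrox x₂ hx₂
  choose u huP hfu hgu using fun n => hP _ (hfP n) _ (hgP n)
  obtain ⟨d, hd, hdP, hud⟩ := hP.exists_monotone_ge u huP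
  obtain ⟨s, hsD, hds⟩ := hbdd d hd hdP
  have hus : ∀ n, u n ≤ s := fun n => (hud n).trans (hds ⟨n, rfl⟩)
  exact ⟨s, hsD, hfx₁.2 (Set.forall_mem_range.2 fun n => (hfu n).trans (hus n)),
    hgx₂.2 (Set.forall_mem_range.2 fun n => (hgu n).trans (hus n))⟩

theorem WayBelow.le {S : Type*} [PartialOrder S] {x y : S} (h : WayBelow x y) : x ≤ y := by
  obtain ⟨-, hn⟩ := h (fun _ => y) monotone_const y (by simp [isLUB_singleton]) le_rfl
  exact hn

theorem WayBelow.trans_le {S : Type*} [PartialOrder S] {x y z : S}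
    (hxy : WayBelow x y) (hyz : y ≤ z) : WayBelow x z :=
  fun f hf s hs hzs => hxy f hf s hs (hyz.trans hzs)

theorem exists_le_wayBelow_of_wayBelow {S : Type*} [PartialOrder S] (hO2 : AxO2 (S := S))
    {a b u : S} (ha : WayBelow a u) (hb : WayBelow b u) :
    ∃ c, a ≤ c ∧ b ≤ c ∧ WayBelow c u := by
  obtain ⟨f, hf, hfwb, hfu⟩ := hO2 u
  obtain ⟨m, ham⟩ := ha f hf u hfu le_rfl
  obtain ⟨n, hbn⟩ := hb f hf u hfu le_rfl
  refine ⟨f (max m n), ham.trans (hf (le_max_left m n)), hbn.trans (hf (le_max_right m n)), ?_⟩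
  exact (hfwb _).trans_le (hfu.1 ⟨_, rfl⟩)

def wayBelowSet {S : Type*} [PartialOrder S] (D : Set S) : Set S :=
  {a | ∃ c ∈ D, WayBelow a c}

theorem wayBelowSet_subset {S : Type*} [PartialOrder S] {D : Set S} (hD : IsLowerSet D) :
    wayBelowSet D ⊆ D :=
  fun _ ⟨_, hcD, hac⟩ => hD hac.le hcD

theorem exists_seq_mem_wayBelowSet_isLUB {S : Type*} [PartialOrder S] (hO2 : AxO2 (S := S))
    {D : Set S} (hD : IsLowerSet D) {x : S} (hx : x ∈ D) :
    ∃ f : ℕ → S, (∀ n, f n ∈ wayBelowSet D) ∧ IsLUB (Set.range f) x := by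
  obtain ⟨f, -, hfwb, hfx⟩ := hO2 x
  exact ⟨f, fun n => ⟨f (n + 1), hD (hfx.1 ⟨_, rfl⟩) hx, hfwb n⟩, hfx⟩

theorem IsIdeal.isLowerSet {J : Set S} (hJ : IsIdeal J) : IsLowerSet J :=
  fun a b hba ha => hJ.2.2.1 b a ha hba

theorem directedOn_wayBelowSet_inter_Iic (hO2 : AxO2 (S := S)) (hO7 : AxO7 (S := S))
    {J : Set S} (hJ : IsIdeal J) (w : S) :
    DirectedOn (· ≤ ·) (wayBelowSet (J ∩ Set.Iic w)) := by
  rintro a ⟨c₁, ⟨hc₁J, hc₁w⟩, hac₁⟩ b ⟨c₂, ⟨hc₂J, hc₂w⟩, hbc₂⟩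
  obtain ⟨x, hax, hbx, hxw, hx_le⟩ := hO7 a c₁ b c₂ w hac₁ hc₁w hbc₂ hc₂w
  have hxJ : x ∈ J := hJ.isLowerSet hx_le (hJ.2.1 c₁ c₂ hc₁J hc₂J)
  obtain ⟨d, had, hbd, hdx⟩ := exists_le_wayBelow_of_wayBelow hO2 hax hbx
  exact ⟨d, ⟨x, ⟨hxJ, hxw⟩, hdx⟩, had, hbd⟩

/-- In a Cu-semigroup satisfying O7, for any `w` and any ideal `J`,
the set `{x : x ∈ J, x ≤ w}` is upward directed. -/
theorem stmt7 {S : Type*} [AddCommMonoid S] [PartialOrder S]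
    (hCu : CuSemigroup (S := S)) (hO7 : AxO7 (S := S))
    (w : S) (J : Set S) (hJ : IsIdeal J) :
    DirectedOn (· ≤ ·) {x : S | x ∈ J ∧ x ≤ w} := by
  obtain ⟨-, hO1, hO2, -, -⟩ := hCu
  have hD : IsLowerSet (J ∩ Set.Iic w) := hJ.isLowerSet.inter (isLowerSet_Iic w)
  refine (directedOn_wayBelowSet_inter_Iic hO2 hO7 hJ w).of_isLUB_seq
    (fun x hx => exists_seq_mem_wayBelowSet_isLUB hO2 hD hx) fun d hd hdP => ?_
  obtain ⟨s, hs⟩ := hO1 d hd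
  have hdD : ∀ n, d n ∈ J ∩ Set.Iic w := fun n => wayBelowSet_subset hD (hdP n)
  exact ⟨s, ⟨hJ.2.2.2 d hd (fun n => (hdD n).1) s hs,
    hs.2 (Set.forall_mem_range.2 fun n => (hdD n).2)⟩, hs.1⟩

end CuFormal
end

section
/- Let S be a countably based Cu-semigroup satisfying O7. Then every x ∈ S and every idempotent w ∈ S (i.e., 2w = w) have an infimum x ∧ w in S. -/
/-!
The elements way below some common lower bound of `x` and `w` form a set `D` whose supremum
is the infimum of `x` and `w`, because by O2 every common lower bound is a supremum of elements
of `D`. If `w` is idempotent, O7 makes `D` upward directed: two elements way below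
`z₁, z₂ ≤ x, w` are way below some `y ≤ x` with `y ≤ z₁ + z₂ ≤ w + w = w`. In a countably based
Cu-semigroup every nonempty upward directed set has a supremum, namely that of an increasing
sequence in it dominating all basis elements below its members.
-/

open scoped ENNReal

section Order

variable {α : Type*} [Preorder α] {D : Set α}

theorem DirectedOn.exists_monotone_ge_s8 (hD : DirectedOn (· ≤ ·) D) (d : ℕ → α)
    (hd : ∀ n, d n ∈ D) : ∃ f : ℕ → α, Monotone f ∧ (∀ n, f n ∈ D) ∧ ∀ n, d n ≤ f n := by
  choose u hu hleft hright using hD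
  let f : ℕ → D := fun n => Nat.rec ⟨d 0, hd 0⟩
    (fun n p => ⟨u p p.2 (d (n + 1)) (hd (n + 1)), hu _ _ _ _⟩) n
  refine ⟨Subtype.val ∘ f, monotone_nat_of_le_succ fun n => hleft _ _ _ _, fun n => (f n).2, ?_⟩
  rintro (_ | n)
  · exact le_rfl
  · exact hright _ _ _ _

theorem DirectedOn.exists_monotone_cofinal (hD : DirectedOn (· ≤ ·) D) (hne : D.Nonempty)
    {B : Set α} (hB : B.Countable) : ∃ f : ℕ → α, Monotone f ∧ (∀ n, f n ∈ D) ∧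
      ∀ b ∈ B, ∀ d ∈ D, b ≤ d → ∃ n, b ≤ f n := by
  classical
  have : Nonempty α := ⟨hne.some⟩
  obtain ⟨e, hBe⟩ := Set.countable_iff_exists_subset_range.mp hB
  let d : ℕ → α := fun n => if h : ∃ y ∈ D, e n ≤ y then h.choose else hne.some
  have hd : ∀ n, d n ∈ D := fun n => by
    by_cases h : ∃ y ∈ D, e n ≤ y
    · simpa only [d, dif_pos h] using h.choose_spec.1
    · simpa only [d, dif_neg h] using hne.some_mem
  obtain ⟨f, hf, hfD, hdf⟩ := hD.exists_monotone_ge_s8 d hd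
  refine ⟨f, hf, hfD, fun b hb d' hd' hbd' => ?_⟩
  obtain ⟨n, rfl⟩ := hBe hb
  have h : ∃ y ∈ D, e n ≤ y := ⟨d', hd', hbd'⟩
  refine ⟨n, le_trans ?_ (hdf n)⟩
  simpa only [d, dif_pos h] using h.choose_spec.2

end Order

namespace CuFormal

variable {S : Type*} [PartialOrder S]

theorem WayBelow.le_s8 {a b : S} (h : WayBelow a b) : a ≤ b := by
  obtain ⟨n, hn⟩ := h (fun _ => b) monotone_const b (by simp [Set.range_const]) le_rfl
  exact hn

theorem WayBelow.trans_le_s8 {a b c : S} (h : WayBelow a b) (hbc : b ≤ c) : WayBelow a c :=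
  fun f hf s hs hcs => h f hf s hs (hbc.trans hcs)

theorem wayBelow_of_isBot {a : S} (ha : IsBot a) (y : S) : WayBelow a y :=
  fun f _ _ _ _ => ⟨0, ha (f 0)⟩

theorem exists_upperBound_wayBelow (hO2 : AxO2 (S := S)) {a b y : S} (ha : WayBelow a y)
    (hb : WayBelow b y) : ∃ d : S, a ≤ d ∧ b ≤ d ∧ WayBelow d y := by
  obtain ⟨g, hg, hgwb, hgy⟩ := hO2 y
  obtain ⟨n, hn⟩ := ha g hg y hgy le_rfl
  obtain ⟨k, hk⟩ := hb g hg y hgy le_rfl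
  exact ⟨g (max n k), hn.trans (hg (le_max_left n k)), hk.trans (hg (le_max_right n k)),
    (hgwb (max n k)).trans_le_s8 (hgy.1 (Set.mem_range_self _))⟩

theorem exists_isLUB_of_directedOn (hO1 : AxO1 (S := S)) (hcb : CountablyBased (S := S))
    {D : Set S} (hD : DirectedOn (· ≤ ·) D) (hne : D.Nonempty) : ∃ s : S, IsLUB D s := by
  obtain ⟨B, hBc, hB⟩ := hcb
  obtain ⟨f, hf, hfD, hcofinal⟩ := hD.exists_monotone_cofinal hne hBc
  obtain ⟨s, hs⟩ := hO1 f hf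
  refine ⟨s, fun d hd => ?_, fun u hu => hs.2 ?_⟩
  · obtain ⟨g, hgB, -, -, hgd⟩ := hB d
    refine hgd.2 ?_
    rintro _ ⟨n, rfl⟩
    obtain ⟨k, hk⟩ := hcofinal (g n) (hgB n) d hd (hgd.1 (Set.mem_range_self n))
    exact hk.trans (hs.1 (Set.mem_range_self k))
  · rintro _ ⟨n, rfl⟩
    exact hu (hfD n)

def wayBelowLowerBounds (x w : S) : Set S := {y | ∃ z, WayBelow y z ∧ z ≤ x ∧ z ≤ w}

theorem mem_wayBelowLowerBounds_of_isBot {a : S} (ha : IsBot a) (x w : S) :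
    a ∈ wayBelowLowerBounds x w :=
  ⟨a, wayBelow_of_isBot ha a, ha x, ha w⟩

theorem directedOn_wayBelowLowerBounds [AddCommMonoid S]
    (hadd : ∀ a b c : S, b ≤ c → a + b ≤ a + c) (hO2 : AxO2 (S := S)) (hO7 : AxO7 (S := S))
    (x : S) {w : S} (hw : w + w = w) :
    DirectedOn (· ≤ ·) (wayBelowLowerBounds x w) := by
  rintro a ⟨z₁, ha, hz₁x, hz₁w⟩ b ⟨z₂, hb, hz₂x, hz₂w⟩
  obtain ⟨y, hay, hby, hyx, hyz⟩ := hO7 a z₁ b z₂ x ha hz₁x hb hz₂x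
  have hyw : y ≤ w := calc
    y ≤ z₁ + z₂ := hyz
    _ ≤ z₁ + w := hadd z₁ z₂ w hz₂w
    _ = w + z₁ := add_comm _ _
    _ ≤ w + w := hadd w z₁ w hz₁w
    _ = w := hw
  obtain ⟨d, had, hbd, hdy⟩ := exists_upperBound_wayBelow hO2 hay hby
  exact ⟨d, ⟨y, hdy, hyx, hyw⟩, had, hbd⟩

theorem isGLB_pair_of_isLUB_wayBelowLowerBounds (hO2 : AxO2 (S := S)) {x w m : S}
    (hm : IsLUB (wayBelowLowerBounds x w) m) : IsGLB {x, w} m := by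
  have hmx : m ≤ x := hm.2 fun _ ⟨_, hyz, hzx, _⟩ => hyz.le_s8.trans hzx
  have hmw : m ≤ w := hm.2 fun _ ⟨_, hyz, _, hzw⟩ => hyz.le_s8.trans hzw
  refine ⟨?_, fun z hz => ?_⟩
  · rintro _ (rfl | rfl)
    exacts [hmx, hmw]
  · obtain ⟨g, -, hgwb, hgz⟩ := hO2 z
    refine hgz.2 ?_
    rintro _ ⟨n, rfl⟩
    have hzn : g (n + 1) ≤ z := hgz.1 (Set.mem_range_self _)
    exact hm.1 ⟨g (n + 1), hgwb n, hzn.trans (hz (Set.mem_insert _ _)),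
      hzn.trans (hz (Set.mem_insert_of_mem _ rfl))⟩

/-- In a countably based Cu-semigroup satisfying O7, every element and
every idempotent have an infimum. -/
theorem stmt8 {S : Type*} [AddCommMonoid S] [PartialOrder S]
    (hCu : CuSemigroup (S := S)) (hcb : CountablyBased (S := S)) (hO7 : AxO7 (S := S))
    (x w : S) (hw : w + w = w) :
    ∃ m : S, IsGLB {x, w} m := by
  obtain ⟨⟨hpos, hadd⟩, hO1, hO2, -, -⟩ := hCu
  obtain ⟨m, hm⟩ := exists_isLUB_of_directedOn hO1 hcb
    (directedOn_wayBelowLowerBounds hadd hO2 hO7 x hw)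
    ⟨0, mem_wayBelowLowerBounds_of_isBot hpos x w⟩
  exact ⟨m, isGLB_pair_of_isLUB_wayBelowLowerBounds hO2 hm⟩

end CuFormal
end

section
/- Let S be a countably based Cu-semigroup satisfying O5, O6 and O7, let w ∈ S be idempotent, and let x, y ∈ S. Then x ≤ y + w if and only if x + (y ∧ w) ≤ y + (x ∧ w). -/
open scoped ENNReal

namespace CuFormal

variable {S : Type*} [AddCommMonoid S] [PartialOrder S]

/-!
Approximate `x` and `y ∧ w` from way below. For `v' ≪ v ≤ y ∧ w`, axiom O5 (with `w' = 0`)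
gives a complement `z` of `v'` in `y`, i.e. `v' + z ≤ y ≤ v + z`. Since `v ≤ w = 2w`, this yields
`x ≤ y + w ≤ z + w`, and O6 splits an approximant `x' ≪ x` as `x' ≤ y' + z'` with `y' ≤ z` and
`z' ≤ x, w`, hence `z' ≤ x ∧ w`. Then `x' + v' ≤ z + (x ∧ w) + v' ≤ y + (x ∧ w)`, and O2 with O4
pass to the supremum.
-/

theorem PosOrdered.add_le_add (hpos : PosOrdered (S := S)) {a b c d : S}
    (hab : a ≤ b) (hcd : c ≤ d) : a + c ≤ b + d :=
  calc a + c ≤ a + d := hpos.2 a c d hcd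
    _ = d + a := add_comm _ _
    _ ≤ d + b := hpos.2 d a b hab
    _ = b + d := add_comm _ _

theorem PosOrdered.le_add_right (hpos : PosOrdered (S := S)) (a b : S) : a ≤ a + b := by
  simpa using hpos.2 a 0 b (hpos.1 b)

theorem PosOrdered.wayBelow_zero (hpos : PosOrdered (S := S)) (y : S) : WayBelow 0 y :=
  fun f _ _ _ _ => ⟨0, hpos.1 (f 0)⟩

theorem exists_add_le_le_add_of_wayBelow (hpos : PosOrdered (S := S)) (hO5 : AxO5 (S := S))
    {v' v y : S} (hv' : WayBelow v' v) (hvy : v ≤ y) : ∃ z, v' + z ≤ y ∧ y ≤ v + z := by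
  obtain ⟨z, h₁, h₂, -⟩ := hO5 v' v y 0 0 hv' hvy (hpos.wayBelow_zero 0) (by rwa [add_zero])
  exact ⟨z, h₁, h₂⟩

theorem add_le_of_forall_wayBelow (hO2 : AxO2 (S := S)) (hO4 : AxO4 (S := S)) {x v t : S}
    (h : ∀ x' x'' v' v'', WayBelow x' x'' → x'' ≤ x → WayBelow v' v'' → v'' ≤ v → x' + v' ≤ t) :
    x + v ≤ t := by
  obtain ⟨f, hf, hff, hfx⟩ := hO2 x
  obtain ⟨g, hg, hgg, hgv⟩ := hO2 v
  refine (hO4 f g hf hg x v hfx hgv).2 ?_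
  rintro _ ⟨n, rfl⟩
  exact h _ _ _ _ (hff n) (hfx.1 ⟨n + 1, rfl⟩) (hgg n) (hgv.1 ⟨n + 1, rfl⟩)

theorem add_wayBelow_le_add_glb (hpos : PosOrdered (S := S)) (hO5 : AxO5 (S := S))
    (hO6 : AxO6 (S := S)) {w x y xw : S} (hw : w + w = w) (hxw : IsGLB {x, w} xw)
    (hxyw : x ≤ y + w) {x' x'' v' v : S} (hx' : WayBelow x' x'') (hx'' : x'' ≤ x)
    (hv' : WayBelow v' v) (hvy : v ≤ y) (hvw : v ≤ w) : x' + v' ≤ y + xw := by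
  obtain ⟨z, hz₁, hz₂⟩ := exists_add_le_le_add_of_wayBelow hpos hO5 hv' hvy
  have hxzw : x'' ≤ z + w :=
    calc x'' ≤ y + w := hx''.trans hxyw
      _ ≤ (v + z) + w := hpos.add_le_add hz₂ le_rfl
      _ = z + (v + w) := by abel
      _ ≤ z + (w + w) := hpos.add_le_add le_rfl (hpos.add_le_add hvw le_rfl)
      _ = z + w := by rw [hw]
  obtain ⟨y', z', hx'le, -, hy'z, hz'x, hz'w⟩ := hO6 x' x'' z w hx' hxzw
  have hz'xw : z' ≤ xw := hxw.2 (by rintro u (rfl | rfl); exacts [hz'x.trans hx'', hz'w])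
  calc x' + v' ≤ (y' + z') + v' := hpos.add_le_add hx'le le_rfl
    _ ≤ (z + xw) + v' := hpos.add_le_add (hpos.add_le_add hy'z hz'xw) le_rfl
    _ = (v' + z) + xw := by abel
    _ ≤ y + xw := hpos.add_le_add hz₁ le_rfl

theorem stmt10_general {S : Type*} [AddCommMonoid S] [PartialOrder S]
    (hCu : CuSemigroup (S := S))
    (hO5 : AxO5 (S := S)) (hO6 : AxO6 (S := S))
    (w : S) (hw : w + w = w) (x y : S)
    (xw yw : S) (hxw : IsGLB {x, w} xw) (hyw : IsGLB {y, w} yw) :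
    x ≤ y + w ↔ x + yw ≤ y + xw := by
  obtain ⟨hpos, -, hO2, -, hO4⟩ := hCu
  have hywy : yw ≤ y := hyw.1 (by simp)
  have hyww : yw ≤ w := hyw.1 (by simp)
  constructor
  · intro hxyw
    refine add_le_of_forall_wayBelow hO2 hO4 fun x' x'' v' v hx' hx'' hv' hv => ?_
    exact add_wayBelow_le_add_glb hpos hO5 hO6 hw hxw hxyw hx' hx'' hv' (hv.trans hywy)
      (hv.trans hyww)
  · intro h
    calc x ≤ x + yw := hpos.le_add_right x yw
      _ ≤ y + xw := h
      _ ≤ y + w := hpos.add_le_add le_rfl (hxw.1 (by simp))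

/-- `x ≤ y + w` iff `x + (y ∧ w) ≤ y + (x ∧ w)` for idempotent `w`. -/
theorem stmt10 {S : Type*} [AddCommMonoid S] [PartialOrder S]
    (hCu : CuSemigroup (S := S)) (hcb : CountablyBased (S := S))
    (hO5 : AxO5 (S := S)) (hO6 : AxO6 (S := S)) (hO7 : AxO7 (S := S))
    (w : S) (hw : w + w = w) (x y : S)
    (xw yw : S) (hxw : IsGLB {x, w} xw) (hyw : IsGLB {y, w} yw) :
    x ≤ y + w ↔ x + yw ≤ y + xw :=
  stmt10_general hCu hO5 hO6 w hw x y xw yw hxw hyw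

end CuFormal
end

section
/- Let S be a Cu-semigroup and let λ ∈ F(S) be a functional. Then J := { x ∈ S : λ(x') < ∞ for all x' ≪ x } is an ideal of S, and ε(λ) = λ_J, where ε(λ) = lim_n (1/n)λ is the idempotent part of λ and λ_J is the functional that is 0 on J and ∞ on S \ J. -/
open scoped ENNReal

namespace CuFormal

variable {S : Type*} [AddCommMonoid S] [PartialOrder S]

lemma wb_le {S : Type*} [AddCommMonoid S] [PartialOrder S] {x y : S}
    (h : WayBelow x y) : x ≤ y := by
  obtain ⟨n, hn⟩ := h (fun _ => y) monotone_const y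
    (by simp [Set.range_const]) le_rfl
  exact hn

lemma wb_le_right {S : Type*} [AddCommMonoid S] [PartialOrder S] {x y z : S}
    (h : WayBelow x y) (hyz : y ≤ z) : WayBelow x z :=
  fun f hf s hs hzs => h f hf s hs (hyz.trans hzs)

open Classical in
/-- `J := {x : λ(x') < ∞ for all x' ≪ x}` is an ideal and
`ε(λ) = lim_n (1/n)λ = λ_J` in the topology of `F(S)`, i.e. for all `x' ≪ x`,
`limsup_n λ(x')/n ≤ λ_J(x) ≤ liminf_n λ(x)/n`. -/
theorem stmt13 {S : Type*} [AddCommMonoid S] [PartialOrder S]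
    (hCu : CuSemigroup (S := S)) (l : S → ℝ≥0∞) (hl : IsFunctional l) :
    IsIdeal {x : S | ∀ x' : S, WayBelow x' x → l x' < ∞} ∧
    (∀ x' x : S, WayBelow x' x →
      Filter.limsup (fun n : ℕ => l x' / ((n : ℝ≥0∞) + 1)) Filter.atTop ≤
        (if x ∈ {u : S | ∀ u' : S, WayBelow u' u → l u' < ∞} then 0 else (∞ : ℝ≥0∞)) ∧
      (if x ∈ {u : S | ∀ u' : S, WayBelow u' u → l u' < ∞} then 0 else (∞ : ℝ≥0∞)) ≤
        Filter.liminf (fun n : ℕ => l x / ((n : ℝ≥0∞) + 1)) Filter.atTop) := by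
  set J : Set S := {x : S | ∀ x' : S, WayBelow x' x → l x' < ∞} with hJ
  obtain ⟨⟨hzero, hmono⟩, hO1, hO2, hO3, hO4⟩ := hCu
  obtain ⟨hl0, hladd, hlmono, hlsup⟩ := hl
  have hideal : IsIdeal J := by
    refine ⟨?_, ?_, ?_, ?_⟩
    · intro x' hx'
      have : x' ≤ 0 := wb_le hx'
      calc l x' ≤ l 0 := hlmono this
        _ < ∞ := by simp [hl0]
    · intro x y hx hy z hz
      obtain ⟨f, hfmono, hfwb, hflub⟩ := hO2 x
      obtain ⟨g, hgmono, hgwb, hglub⟩ := hO2 y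
      have hsum := hO4 f g hfmono hgmono x y hflub hglub
      obtain ⟨n, hn⟩ := hz (fun n => f n + g n)
        (fun a b hab => (hmono _ _ _ (hgmono hab)).trans
          (by simpa [add_comm] using hmono (g b) (f a) (f b) (hfmono hab)))
        (x + y) hsum le_rfl
      have hfx : l (f n) < ∞ := hx (f n) (wb_le_right (hfwb n)
        (hflub.1 ⟨n + 1, rfl⟩))
      have hgy : l (g n) < ∞ := hy (g n) (wb_le_right (hgwb n)
        (hglub.1 ⟨n + 1, rfl⟩))
      calc l z ≤ l (f n + g n) := hlmono hn
        _ = l (f n) + l (g n) := hladd _ _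
        _ < ∞ := ENNReal.add_lt_top.2 ⟨hfx, hgy⟩
    · intro x y hy hxy x' hx'
      exact hy x' (wb_le_right hx' hxy)
    · intro f hfmono hfJ s hs x' hx'
      obtain ⟨h, hhmono, hhwb, hhlub⟩ := hO2 s
      obtain ⟨k, hk⟩ := hx' h hhmono s hhlub le_rfl
      have h1 : WayBelow (h (k + 1)) s :=
        wb_le_right (hhwb (k + 1)) (hhlub.1 ⟨k + 2, rfl⟩)
      obtain ⟨m, hm⟩ := h1 f hfmono s hs le_rfl
      have hfin : l (h k) < ∞ := hfJ m (h k) (wb_le_right (hhwb k) hm)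
      exact lt_of_le_of_lt (hlmono hk) hfin
  refine ⟨hideal, ?_⟩
  intro x' x hx'x
  by_cases hxJ : x ∈ J
  · simp only [show x ∈ {u : S | ∀ u' : S, WayBelow u' u → l u' < ∞} from hxJ, if_pos]
    constructor
    · have hfin : l x' ≠ ∞ := (hxJ x' hx'x).ne
      have htend : Filter.Tendsto (fun n : ℕ => l x' / ((n : ℝ≥0∞) + 1))
          Filter.atTop (nhds 0) := by
        have h1 : Filter.Tendsto (fun n : ℕ => ((n : ℝ≥0∞) + 1)) Filter.atTop
            (nhds ∞) :=
          tendsto_nhds_top_mono' ENNReal.tendsto_nat_nhds_top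
            (fun n => le_self_add)
        have := ENNReal.Tendsto.const_div (a := l x') h1 (Or.inr hfin)
        simpa [ENNReal.div_top] using this
      exact le_of_eq htend.limsup_eq
    · exact zero_le
  · simp only [show x ∉ {u : S | ∀ u' : S, WayBelow u' u → l u' < ∞} from hxJ, if_neg, not_false_iff]
    refine ⟨le_top, ?_⟩
    simp only [hJ, Set.mem_setOf_eq, not_forall, not_lt, top_le_iff] at hxJ
    obtain ⟨x'', hx''wb, hx''⟩ := hxJ
    have hxtop : l x = ∞ := top_le_iff.mp (hx''.ge.trans (hlmono (wb_le hx''wb)))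
    have : (fun n : ℕ => l x / ((n : ℝ≥0∞) + 1)) = fun _ => (∞ : ℝ≥0∞) := by
      funext n
      rw [hxtop, ENNReal.top_div_of_ne_top (by simp)]
    rw [this, Filter.liminf_const]


end CuFormal
end

section
/- Let S be a Cu-semigroup satisfying O5 and O6, and let λ ∈ F(S) be a functional for which S satisfies Edwards' condition. Then for all x, y ∈ S: sup { λ₁(x) + λ₂(y) : λ₁ + λ₂ = λ } = inf { λ(a) : x ≤ a and y ≤ a }. -/
open scoped ENNReal

namespace CuFormal

variable {S : Type*} [AddCommMonoid S] [PartialOrder S]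

/-- the dual Edwards condition
`sup { λ₁(x) + λ₂(y) : λ₁ + λ₂ = λ } = inf { λ(a) : x, y ≤ a }`. -/
theorem stmt16 {S : Type*} [AddCommMonoid S] [PartialOrder S]
    (hCu : CuSemigroup (S := S)) (hO5 : AxO5 (S := S)) (hO6 : AxO6 (S := S))
    (l : S → ℝ≥0∞) (hl : IsFunctional l) (hEd : EdwardsFor l) (x y : S) :
    sSup {t : ℝ≥0∞ | ∃ l₁ l₂ : S → ℝ≥0∞, IsFunctional l₁ ∧ IsFunctional l₂ ∧
        (∀ u : S, l u = l₁ u + l₂ u) ∧ t = l₁ x + l₂ y}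
      = sInf {t : ℝ≥0∞ | ∃ a : S, x ≤ a ∧ y ≤ a ∧ t = l a} := by
  obtain ⟨⟨hpos, haddmono⟩, hO1, hO2, hO3, hO4⟩ := hCu
  obtain ⟨hl0, hladd, hlmono, hlsup⟩ := hl
  have wb00 : WayBelow (0 : S) 0 := fun f _ s _ _ => ⟨0, hpos _⟩
  set D : Set ℝ≥0∞ := {t : ℝ≥0∞ | ∃ l₁ l₂ : S → ℝ≥0∞, IsFunctional l₁ ∧ IsFunctional l₂ ∧
      (∀ u : S, l u = l₁ u + l₂ u) ∧ t = l₁ x + l₂ y} with hD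
  set I : ℝ≥0∞ := sInf {t : ℝ≥0∞ | ∃ a : S, x ≤ a ∧ y ≤ a ∧ t = l a} with hIdef
  have hxle : x ≤ x + y := by simpa using haddmono x 0 y (hpos y)
  have hyle : y ≤ x + y := by
    have := haddmono y 0 x (hpos x)
    simpa [add_comm] using this
  have hIfin : I ≤ l x + l y := by
    rw [← hladd]
    exact sInf_le ⟨x + y, hxle, hyle, rfl⟩
  -- key inequality: I + l z ≤ l x + l y for all z ≤ x, z ≤ y
  have key : ∀ z : S, z ≤ x → z ≤ y → I + l z ≤ l x + l y := by
    intro z hzx hzy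
    obtain ⟨f, hfmono, hfwb, hflub⟩ := hO2 z
    have hfz : ∀ n, f n ≤ z := fun n => hflub.1 ⟨n, rfl⟩
    have hwbz : ∀ n, WayBelow (f n) z := by
      intro n g hg s hs hzs
      exact hfwb n g hg s hs (le_trans (hfz (n + 1)) hzs)
    have hbound : ∀ n, I + l (f n) ≤ l x + l y := by
      intro n
      obtain ⟨c, h1, h2, _⟩ := hO5 (f n) z x 0 0 (hwbz n) hzx wb00
        (by simpa using hzx)
      have hxa : x ≤ y + c := by
        refine le_trans h2 ?_
        calc z + c = c + z := add_comm _ _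
          _ ≤ c + y := haddmono c z y hzy
          _ = y + c := add_comm _ _
      have hya : y ≤ y + c := by simpa using haddmono y 0 c (hpos c)
      have hIa : I ≤ l (y + c) := sInf_le ⟨y + c, hxa, hya, rfl⟩
      have hsum : f n + (y + c) ≤ x + y := by
        have h3 : f n + (y + c) = y + (f n + c) := by
          rw [← add_assoc, add_comm (f n) y, add_assoc]
        rw [h3]
        calc y + (f n + c) ≤ y + x := haddmono y _ x h1
          _ = x + y := add_comm _ _
      calc I + l (f n) ≤ l (y + c) + l (f n) := add_le_add hIa le_rfl
        _ = l (f n + (y + c)) := by rw [hladd (f n) (y + c)]; exact add_comm _ _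
        _ ≤ l (x + y) := hlmono hsum
        _ = l x + l y := hladd x y
    have hlz : l z = ⨆ n, l (f n) := hlsup f hfmono z hflub
    rw [hlz, ENNReal.add_iSup]
    exact iSup_le hbound
  apply le_antisymm
  · -- easy direction
    apply sSup_le
    rintro t ⟨l1, l2, ⟨_, _, h1m, _⟩, ⟨_, _, h2m, _⟩, hsum, rfl⟩
    apply le_sInf
    rintro s ⟨a, hxa, hya, rfl⟩
    calc l1 x + l2 y ≤ l1 a + l2 a := add_le_add (h1m hxa) (h2m hya)
      _ = l a := (hsum a).symm
  · -- hard direction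
    by_cases hfin : l x + l y = ∞
    · rcases ENNReal.add_eq_top.mp hfin with h | h
      · have hz : IsFunctional (fun _ : S => (0 : ℝ≥0∞)) :=
          ⟨rfl, fun _ _ => by simp, fun _ _ _ => le_rfl,
            fun f _ s _ => by simp⟩
        have hmem : l x + (0 : ℝ≥0∞) ∈ D :=
          ⟨l, fun _ => 0, ⟨hl0, hladd, hlmono, hlsup⟩, hz, fun u => by simp, rfl⟩
        have : (⊤ : ℝ≥0∞) ≤ sSup D := by
          have := le_sSup hmem
          simpa [h] using this
        exact le_trans le_top this
      · have hz : IsFunctional (fun _ : S => (0 : ℝ≥0∞)) :=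
          ⟨rfl, fun _ _ => by simp, fun _ _ _ => le_rfl,
            fun f _ s _ => by simp⟩
        have hmem : (0 : ℝ≥0∞) + l y ∈ D :=
          ⟨fun _ => 0, l, hz, ⟨hl0, hladd, hlmono, hlsup⟩, fun u => by simp, rfl⟩
        have : (⊤ : ℝ≥0∞) ≤ sSup D := by
          have := le_sSup hmem
          simpa [h] using this
        exact le_trans le_top this
    · set M : ℝ≥0∞ := sSup {t : ℝ≥0∞ | ∃ z : S, z ≤ x ∧ z ≤ y ∧ t = l z} with hMdef
      have hMx : M ≤ l x := by
        apply sSup_le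
        rintro t ⟨z, hz, _, rfl⟩
        exact hlmono hz
      have hMfin : M ≠ ∞ := by
        intro hM
        exact hfin (ENNReal.add_eq_top.mpr (Or.inl (top_le_iff.mp (hM ▸ hMx))))
      have hIM : I + M ≤ l x + l y := by
        rw [hMdef, ENNReal.add_sSup]
        refine iSup₂_le ?_
        rintro t ⟨z, hzx, hzy, rfl⟩
        exact key z hzx hzy
        exact ⟨l 0, 0, hpos x, hpos y, rfl⟩
      refine ENNReal.le_of_forall_pos_le_add ?_
      intro ε hε _
      have hlt : hatInf x y l < M + ε := by
        rw [hEd x y, ← hMdef]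
        exact ENNReal.lt_add_right hMfin (by exact_mod_cast hε.ne')
      obtain ⟨u, hu, hult⟩ := sInf_lt_iff.mp hlt
      obtain ⟨l1, l2, hf1, hf2, hsum, rfl⟩ := hu
      have hv : l2 x + l1 y ∈ D :=
        ⟨l2, l1, hf2, hf1, fun u => by rw [hsum u, add_comm], rfl⟩
      have hvS : l2 x + l1 y ≤ sSup D := le_sSup hv
      have hT : (l1 x + l2 y) + (l2 x + l1 y) = l x + l y := by
        rw [hsum x, hsum y]; ring
      have hstep : I + M ≤ ((l2 x + l1 y) + ε) + M := by
        calc I + M ≤ l x + l y := hIM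
          _ = (l1 x + l2 y) + (l2 x + l1 y) := hT.symm
          _ ≤ (M + ε) + (l2 x + l1 y) := add_le_add hult.le le_rfl
          _ = ((l2 x + l1 y) + ε) + M := by ring
      have hI' : I ≤ (l2 x + l1 y) + ε :=
        (ENNReal.add_le_add_iff_right hMfin).mp hstep
      exact hI'.trans (add_le_add hvS le_rfl)

end CuFormal
end

section
/- Let M be an AW*-algebra with generalized comparability and let p, q be projections in M. Then there exists a projection r in M such that r is Murray–von Neumann subequivalent to both p and q, and every projection r' that is subequivalent to both p and q is subequivalent to r. Explicitly, if z is a central projection with zp ≾ zq and (1−z)p ≿ (1−z)q, then r = zp + (1−z)q works. -/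
/-!
Cut along the central projection `z`: under `z` one has `p ≾ q`, under `1 - z` one has `q ≾ p`,
so `r = z p + (1 - z) q` is the smaller of the two on each summand. Since `z` is central, products
of elements of the form `z a + (1 - z) b` are computed summand by summand; hence partial
isometries implementing subequivalences on the two summands add up to one implementing a
subequivalence of the sums. This gives `r ≾ p` and `r ≾ q`, and for `r' ≾ p`, `r' ≾ q` it gives
`r' = z r' + (1 - z) r' ≾ z p + (1 - z) q = r`.
-/

namespace AWStar

variable {M : Type*} [CStarAlgebra M] [PartialOrder M] [StarOrderedRing M]

/-- A projection: a self-adjoint idempotent. -/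
def IsProj (p : M) : Prop := IsSelfAdjoint p ∧ p * p = p

/-- Murray–von Neumann subequivalence of projections:
`p ≾ q` iff `p = v v*` and `v* v ≤ q` for some `v`. -/
def MvNLE (p q : M) : Prop := ∃ v : M, p = v * star v ∧ star v * v ≤ q

section Ring

variable {R : Type*} [Ring R]

def glue (z a b : R) : R := z * a + (1 - z) * b

theorem glue_self (z a : R) : glue z a a = a := by
  simp only [glue, sub_mul, one_mul, add_sub_cancel]

variable {z : R}

theorem glue_mul_left (hz : IsIdempotentElem z) (a b : R) : glue z (z * a) b = glue z a b := by
  rw [glue, ← mul_assoc, hz.eq, glue]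

theorem glue_one_sub_mul_right (hz : IsIdempotentElem z) (a b : R) :
    glue z a ((1 - z) * b) = glue z a b := by
  rw [glue, ← mul_assoc, hz.one_sub.eq, glue]

theorem glue_mul_glue (hz : IsIdempotentElem z) (hc : ∀ a, Commute z a) (a b c d : R) :
    glue z a b * glue z c d = glue z (a * c) (b * d) := by
  have hc' : ∀ a, Commute (1 - z) a := fun a => (Commute.one_left a).sub_left (hc a)
  simp only [glue, add_mul, mul_add, (hc a).symm.mul_mul_mul_comm, (hc' a).symm.mul_mul_mul_comm,
    (hc b).symm.mul_mul_mul_comm, (hc' b).symm.mul_mul_mul_comm, hz.eq, hz.one_sub.eq,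
    hz.mul_one_sub_self, hz.one_sub_mul_self, zero_mul, add_zero, zero_add]

theorem star_glue [StarRing R] (hz : IsSelfAdjoint z) (hc : ∀ a, Commute z a) (a b : R) :
    star (glue z a b) = glue z (star a) (star b) := by
  simp only [glue, star_add, star_mul, star_sub, hz.star_eq, (hc _).eq, sub_mul, one_mul]

section StarOrderedRing

variable [StarRing R] [PartialOrder R] [StarOrderedRing R]

theorem mul_le_mul_left_of_commute {e x y : R} (he : IsSelfAdjoint e) (he' : IsIdempotentElem e)
    (hx : Commute e x) (hy : Commute e y) (h : x ≤ y) : e * x ≤ e * y := by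
  have hconj : ∀ w, Commute e w → e * w * e = e * w := fun w hw => by
    rw [mul_assoc, ← hw.eq, ← mul_assoc, he'.eq]
  simpa only [hconj x hx, hconj y hy] using he.conjugate_le_conjugate h

theorem glue_le_glue (hz : IsSelfAdjoint z) (hz' : IsIdempotentElem z) (hc : ∀ a, Commute z a)
    {a b c d : R} (hac : a ≤ c) (hbd : b ≤ d) : glue z a b ≤ glue z c d := by
  have hc' : ∀ a, Commute (1 - z) a := fun a => (Commute.one_left a).sub_left (hc a)
  have hz₁ : IsSelfAdjoint (1 - z) := (IsSelfAdjoint.one R).sub hz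
  exact add_le_add (mul_le_mul_left_of_commute hz hz' (hc a) (hc c) hac)
    (mul_le_mul_left_of_commute hz₁ hz'.one_sub (hc' b) (hc' d) hbd)

end StarOrderedRing

end Ring

omit [StarOrderedRing M] in
theorem MvNLE.refl {p : M} (hp : IsProj p) : MvNLE p p :=
  ⟨p, by rw [hp.1.star_eq, hp.2], by rw [hp.1.star_eq, hp.2]⟩

def IsLargestCommonSubequiv (r p q : M) : Prop :=
  IsProj r ∧ MvNLE r p ∧ MvNLE r q ∧ ∀ r' : M, IsProj r' → MvNLE r' p → MvNLE r' q → MvNLE r' r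

section CentralProjection

variable {z : M} (hz : IsProj z) (hc : ∀ a, Commute z a)
include hz hc

omit [PartialOrder M] [StarOrderedRing M] in
theorem IsProj.glue {p q : M} (hp : IsProj p) (hq : IsProj q) : IsProj (glue z p q) :=
  ⟨by rw [IsSelfAdjoint, star_glue hz.1 hc, hp.1.star_eq, hq.1.star_eq],
    by rw [glue_mul_glue hz.2 hc, hp.2, hq.2]⟩

theorem MvNLE.glue {e₁ e₂ f₁ f₂ : M} (h₁ : MvNLE e₁ f₁) (h₂ : MvNLE e₂ f₂) :
    MvNLE (glue z e₁ e₂) (glue z f₁ f₂) := by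
  obtain ⟨v, rfl, hv⟩ := h₁
  obtain ⟨w, rfl, hw⟩ := h₂
  refine ⟨AWStar.glue z v w, ?_, ?_⟩
  · rw [star_glue hz.1 hc, glue_mul_glue hz.2 hc]
  · rw [star_glue hz.1 hc, glue_mul_glue hz.2 hc]
    exact glue_le_glue hz.1 hz.2 hc hv hw

theorem isLargestCommonSubequiv_glue {p q : M} (hp : IsProj p) (hq : IsProj q)
    (h₁ : MvNLE (z * p) (z * q)) (h₂ : MvNLE ((1 - z) * q) ((1 - z) * p)) :
    IsLargestCommonSubequiv (glue z p q) p q := by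
  refine ⟨hz.glue hc hp hq, ?_, ?_, fun r' _ hr'p hr'q => ?_⟩
  · simpa only [glue_one_sub_mul_right hz.2, glue_self] using (MvNLE.refl hp).glue hz hc h₂
  · simpa only [glue_mul_left hz.2, glue_self] using h₁.glue hz hc (MvNLE.refl hq)
  · simpa only [glue_self] using hr'p.glue hz hc hr'q

end CentralProjection

theorem exists_largest_common_subequivalent_projection
    (hgc : ∀ e f : M, IsProj e → IsProj f → ∃ z : M, IsProj z ∧
      (∀ a : M, z * a = a * z) ∧
      MvNLE (z * e) (z * f) ∧ MvNLE ((1 - z) * f) ((1 - z) * e))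
    (p q : M) (hp : IsProj p) (hq : IsProj q) :
    (∃ r : M, IsProj r ∧ MvNLE r p ∧ MvNLE r q ∧
      ∀ r' : M, IsProj r' → MvNLE r' p → MvNLE r' q → MvNLE r' r) ∧
    (∀ z : M, IsProj z → (∀ a : M, z * a = a * z) →
      MvNLE (z * p) (z * q) → MvNLE ((1 - z) * q) ((1 - z) * p) →
      IsProj (z * p + (1 - z) * q) ∧
      MvNLE (z * p + (1 - z) * q) p ∧ MvNLE (z * p + (1 - z) * q) q ∧
      ∀ r' : M, IsProj r' → MvNLE r' p → MvNLE r' q →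
        MvNLE r' (z * p + (1 - z) * q)) := by
  have glue_largest := fun z hz hc ↦ isLargestCommonSubequiv_glue (z := z) hz hc hp hq
  obtain ⟨z, hz, hc, h₁, h₂⟩ := hgc p q hp hq
  exact ⟨⟨_, glue_largest z hz hc h₁ h₂⟩, glue_largest⟩

end AWStar
end
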